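/- arXiv:0904.4896 — 9 statements merged into one kernel-verified Lean document; each statement's English description precedes it below -/
import Mathlib

section
/- Let X be a generalized topological space and let 𝒰 and 𝒱 be admissible families of X. Then the family {U ∪ V : U ∈ 𝒰, V ∈ 𝒱} is admissible. -/
/-- A generalized topological space (gts) in the sense of Delfs and Knebusch:
a family `Op` of open subsets of `X` together with a family `Cov` of admissible
families of open sets, satisfying finiteness, stability, transitivity,
saturation and regularity. -/
structure GTS (X : Type*) where
  Op : Set (Set X)
  Cov : Set (Set (Set X))
  cov_subset_op : ∀ 𝒰 ∈ Cov, 𝒰 ⊆ Op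
  finiteness_sUnion : ∀ 𝒰 : Set (Set X), 𝒰 ⊆ Op → 𝒰.Finite → ⋃₀ 𝒰 ∈ Op
  finiteness_sInter : ∀ 𝒰 : Set (Set X), 𝒰 ⊆ Op → 𝒰.Finite → ⋂₀ 𝒰 ∈ Op
  finiteness_cov : ∀ 𝒰 : Set (Set X), 𝒰 ⊆ Op → 𝒰.Finite → 𝒰 ∈ Cov
  stability : ∀ V ∈ Op, ∀ 𝒰 ∈ Cov, (fun U => V ∩ U) '' 𝒰 ∈ Cov
  transitivity : ∀ Φ : Set (Set (Set X)), Φ ⊆ Cov → Set.sUnion '' Φ ∈ Cov → ⋃₀ Φ ∈ Cov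
  saturation : ∀ 𝒰 ∈ Cov, ∀ 𝒱 : Set (Set X), 𝒱 ⊆ Op → ⋃₀ 𝒱 = ⋃₀ 𝒰 →
    (∀ U ∈ 𝒰, ∃ V ∈ 𝒱, U ⊆ V) → 𝒱 ∈ Cov
  regularity : ∀ W : Set X, ∀ 𝒰 ∈ Cov, (∀ U ∈ 𝒰, W ∩ U ∈ Op) → W ∩ ⋃₀ 𝒰 ∈ Op

/-- A subset `K` of a gts is small if every admissible family is essentially
finite on `K`. -/
def GTS.IsSmall {X : Type*} (G : GTS X) (K : Set X) : Prop :=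
  ∀ 𝒰 ∈ G.Cov, ∃ 𝒰₀ ⊆ 𝒰, 𝒰₀.Finite ∧ K ∩ ⋃₀ 𝒰 ⊆ ⋃₀ 𝒰₀

/-- A family of sets is essentially finite if some finite subfamily has the
same union. -/
def EssFinite {X : Type*} (𝒰 : Set (Set X)) : Prop :=
  ∃ 𝒰₀ ⊆ 𝒰, 𝒰₀.Finite ∧ ⋃₀ 𝒰₀ = ⋃₀ 𝒰

/-- A map between gtses is strictly continuous if preimages of admissible
families are admissible. -/
def StrictlyContinuous {X Y : Type*} (GX : GTS X) (GY : GTS Y) (f : X → Y) : Prop :=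
  ∀ 𝒰 ∈ GY.Cov, (fun U => f ⁻¹' U) '' 𝒰 ∈ GX.Cov


lemma sUnion_open_of_cov {X : Type*} (G : GTS X) (𝒲 : Set (Set X)) (h : 𝒲 ∈ G.Cov) :
    ⋃₀ 𝒲 ∈ G.Op := by
  have := G.regularity (⋃₀ 𝒲) 𝒲 h (fun U hU => by
    rw [Set.inter_eq_right.mpr (Set.subset_sUnion_of_mem hU)]
    exact G.cov_subset_op 𝒲 h hU)
  rwa [Set.inter_self] at this

theorem pairwise_unions_of_admissible_is_admissible {X : Type*} (G : GTS X)
    (𝒰 𝒱 : Set (Set X)) (hU : 𝒰 ∈ G.Cov) (hV : 𝒱 ∈ G.Cov) :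
    Set.image2 (· ∪ ·) 𝒰 𝒱 ∈ G.Cov := by
  by_cases hUe : 𝒰 = ∅
  · subst hUe; rw [Set.image2_empty_left]
    exact G.finiteness_cov ∅ (Set.empty_subset _) Set.finite_empty
  by_cases hVe : 𝒱 = ∅
  · subst hVe; rw [Set.image2_empty_right]
    exact G.finiteness_cov ∅ (Set.empty_subset _) Set.finite_empty
  obtain ⟨U₀, hU₀⟩ := Set.nonempty_iff_ne_empty.mpr hUe
  obtain ⟨V₀, hV₀⟩ := Set.nonempty_iff_ne_empty.mpr hVe
  -- 𝒰 ∪ 𝒱 is admissible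
  have hUV : 𝒰 ∪ 𝒱 ∈ G.Cov := by
    have h1 : ({𝒰, 𝒱} : Set (Set (Set X))) ⊆ G.Cov := by
      intro W hW; rcases hW with rfl | rfl
      · exact hU
      · exact hV
    have h2 : Set.sUnion '' ({𝒰, 𝒱} : Set (Set (Set X))) ∈ G.Cov := by
      apply G.finiteness_cov
      · rintro W ⟨A, hA, rfl⟩
        rcases hA with rfl | rfl
        · exact sUnion_open_of_cov G _ hU
        · exact sUnion_open_of_cov G _ hV
      · exact ((Set.finite_singleton _).insert _).image _
    have := G.transitivity {𝒰, 𝒱} h1 h2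
    rwa [Set.sUnion_pair] at this
  have hop : Set.image2 (· ∪ ·) 𝒰 𝒱 ⊆ G.Op := by
    rintro W ⟨U, hUm, V, hVm, rfl⟩
    have : ⋃₀ ({U, V} : Set (Set X)) ∈ G.Op := by
      apply G.finiteness_sUnion
      · intro A hA; rcases hA with rfl | rfl
        · exact G.cov_subset_op 𝒰 hU hUm
        · exact G.cov_subset_op 𝒱 hV hVm
      · exact (Set.finite_singleton _).insert _
    rwa [Set.sUnion_pair] at this
  apply G.saturation (𝒰 ∪ 𝒱) hUV _ hop
  · apply Set.Subset.antisymm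
    · rintro x ⟨W, ⟨U, hUm, V, hVm, rfl⟩, hx⟩
      rcases hx with hx | hx
      · exact ⟨U, Or.inl hUm, hx⟩
      · exact ⟨V, Or.inr hVm, hx⟩
    · rintro x ⟨W, hW, hx⟩
      rcases hW with hW | hW
      · exact ⟨W ∪ V₀, ⟨W, hW, V₀, hV₀, rfl⟩, Or.inl hx⟩
      · exact ⟨U₀ ∪ W, ⟨U₀, hU₀, W, hW, rfl⟩, Or.inr hx⟩
  · intro W hW
    rcases hW with hW | hW
    · exact ⟨W ∪ V₀, ⟨W, hW, V₀, hV₀, rfl⟩, Set.subset_union_left⟩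
    · exact ⟨U₀ ∪ W, ⟨U₀, hU₀, W, hW, rfl⟩, Set.subset_union_right⟩
end

section
/- Let X be a generalized topological space and let 𝒰 and 𝒱 be families of open sets of X such that ⋃𝒰 and ⋃𝒱 are open, (⋃𝒰) ∩ (⋃𝒱) = ∅, and the family 𝒰 ∪ 𝒱 is admissible. Then both 𝒰 and 𝒱 are admissible. -/
lemma aux_admissible {X : Type*} (G : GTS X)
    (𝒰 𝒱 : Set (Set X)) (hUop : 𝒰 ⊆ G.Op)
    (hUU : ⋃₀ 𝒰 ∈ G.Op)
    (hdisj : (⋃₀ 𝒰) ∩ (⋃₀ 𝒱) = ∅)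
    (h : 𝒰 ∪ 𝒱 ∈ G.Cov) : 𝒰 ∈ G.Cov := by
  rcases 𝒰.eq_empty_or_nonempty with rfl | ⟨U0, hU0⟩
  · exact G.finiteness_cov ∅ (by simp) Set.finite_empty
  have h2 := G.stability (⋃₀ 𝒰) hUU (𝒰 ∪ 𝒱) h
  refine G.saturation _ h2 𝒰 hUop ?_ ?_
  · rw [Set.sUnion_image]
    apply subset_antisymm
    · intro x hx
      rcases hx with ⟨U, hU, hxU⟩
      exact Set.mem_biUnion (Set.mem_union_left _ hU)
        ⟨⟨U, hU, hxU⟩, hxU⟩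
    · intro x hx
      simp only [Set.mem_iUnion] at hx
      rcases hx with ⟨W, _, hx, _⟩
      exact hx
  · rintro U ⟨W, hW, rfl⟩
    rcases hW with hW | hW
    · exact ⟨W, hW, Set.inter_subset_right⟩
    · refine ⟨U0, hU0, ?_⟩
      intro x ⟨hx1, hx2⟩
      have : x ∈ (⋃₀ 𝒰) ∩ (⋃₀ 𝒱) := ⟨hx1, ⟨W, hW, hx2⟩⟩
      rw [hdisj] at this
      exact this.elim

theorem admissible_of_disjoint_union_admissible {X : Type*} (G : GTS X)
    (𝒰 𝒱 : Set (Set X)) (hUop : 𝒰 ⊆ G.Op) (hVop : 𝒱 ⊆ G.Op)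
    (hUU : ⋃₀ 𝒰 ∈ G.Op) (hVU : ⋃₀ 𝒱 ∈ G.Op)
    (hdisj : (⋃₀ 𝒰) ∩ (⋃₀ 𝒱) = ∅)
    (h : 𝒰 ∪ 𝒱 ∈ G.Cov) :
    𝒰 ∈ G.Cov ∧ 𝒱 ∈ G.Cov := by
  constructor
  · exact aux_admissible G 𝒰 𝒱 hUop hUU hdisj h
  · refine aux_admissible G 𝒱 𝒰 hVop hVU ?_ ?_
    · rw [Set.inter_comm]; exact hdisj
    · rwa [Set.union_comm]
end

section
/- Let n be a natural number and let K be a subset of ℝⁿ (with its Euclidean topology) such that for every family 𝒰 of open subsets of ℝⁿ there is a finite subfamily 𝒰₀ ⊆ 𝒰 with K ∩ ⋃𝒰 ⊆ ⋃𝒰₀. Then K is finite. -/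
/-- Every small subset of the gts `ℝⁿ_top` (open sets: Euclidean-open sets,
admissible families: all families of open sets) is finite. -/
theorem small_subsets_of_euclidean_are_finite (n : ℕ)
    (K : Set (EuclideanSpace ℝ (Fin n)))
    (h : ∀ 𝒰 : Set (Set (EuclideanSpace ℝ (Fin n))), (∀ U ∈ 𝒰, IsOpen U) →
      ∃ 𝒰₀ ⊆ 𝒰, 𝒰₀.Finite ∧ K ∩ ⋃₀ 𝒰 ⊆ ⋃₀ 𝒰₀) :
    K.Finite := by
  classical
  -- Step 1: K is compact.
  have hcpt : IsCompact K := by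
    apply isCompact_of_finite_subcover
    intro ι U hUopen hKsub
    obtain ⟨𝒰₀, h𝒰₀sub, h𝒰₀fin, h𝒰₀cov⟩ := h (Set.range U) (by rintro _ ⟨i, rfl⟩; exact hUopen i)
    have hK𝒰₀ : K ⊆ ⋃₀ 𝒰₀ := by
      intro x hx
      apply h𝒰₀cov
      refine ⟨hx, ?_⟩
      obtain ⟨i, hi⟩ := Set.mem_iUnion.mp (hKsub hx)
      exact ⟨U i, ⟨i, rfl⟩, hi⟩
    -- choose indices
    have hchoice : ∀ V ∈ 𝒰₀, ∃ i, U i = V := fun V hV => h𝒰₀sub hV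
    choose g hg using hchoice
    -- use the finite set of indices
    have hfin : (Set.Finite.toFinset h𝒰₀fin : Finset _) = h𝒰₀fin.toFinset := rfl
    refine ⟨h𝒰₀fin.toFinset.attach.image (fun V => g V.1 (h𝒰₀fin.mem_toFinset.mp V.2)), ?_⟩
    intro x hx
    obtain ⟨V, hV, hxV⟩ := hK𝒰₀ hx
    simp only [Set.mem_iUnion, Finset.mem_image, Finset.mem_attach]
    exact ⟨g V hV, ⟨⟨⟨V, h𝒰₀fin.mem_toFinset.mpr hV⟩, trivial, rfl⟩,
      by rw [hg V hV]; exact hxV⟩⟩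
  -- Step 2: every point has an open neighborhood meeting K in at most itself.
  have hdisc : ∀ x : EuclideanSpace ℝ (Fin n),
      ∃ W : Set (EuclideanSpace ℝ (Fin n)), IsOpen W ∧ x ∈ W ∧ K ∩ W ⊆ {x} := by
    intro x
    set 𝒰 : Set (Set (EuclideanSpace ℝ (Fin n))) :=
      {V | IsOpen V ∧ x ∉ closure V} with h𝒰def
    obtain ⟨𝒰₀, hsub, hfin, hcov⟩ := h 𝒰 (fun V hV => hV.1)
    have hsUnion : ⋃₀ 𝒰 = {x}ᶜ := by
      apply Set.Subset.antisymm
      · rintro y ⟨V, hV, hyV⟩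
        intro hy
        rw [Set.mem_singleton_iff] at hy
        subst hy
        exact hV.2 (subset_closure hyV)
      · intro y hy
        have hxy : (0:ℝ) < dist x y := by
          rw [dist_pos]
          intro hxyeq
          exact hy (by rw [hxyeq]; rfl)
        refine ⟨Metric.ball y (dist x y / 2), ⟨Metric.isOpen_ball, ?_⟩, ?_⟩
        · intro hx
          have := Metric.closure_ball_subset_closedBall hx
          rw [Metric.mem_closedBall] at this
          linarith
        · simpa using hxy
    -- the closure of the finite union misses x
    set C : Set (EuclideanSpace ℝ (Fin n)) := ⋃ V ∈ 𝒰₀, closure V with hCdef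
    have hCclosed : IsClosed C := hfin.isClosed_biUnion (fun V _ => isClosed_closure)
    have hxC : x ∉ C := by
      intro hx
      simp only [hCdef, Set.mem_iUnion] at hx
      obtain ⟨V, hV, hxV⟩ := hx
      exact (hsub hV).2 hxV
    refine ⟨Cᶜ, hCclosed.isOpen_compl, hxC, ?_⟩
    rintro y ⟨hyK, hyC⟩
    by_contra hyx
    have hy𝒰 : y ∈ ⋃₀ 𝒰 := by rw [hsUnion]; exact hyx
    obtain ⟨V, hV, hyV⟩ := hcov ⟨hyK, hy𝒰⟩
    exact hyC (Set.mem_biUnion hV (subset_closure hyV))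
  -- Step 3: compact + discrete ⇒ finite
  choose W hWopen hWmem hWsmall using hdisc
  obtain ⟨t, htK, htcov⟩ := hcpt.elim_nhds_subcover W
    (fun x _ => (hWopen x).mem_nhds (hWmem x))
  apply Set.Finite.subset t.finite_toSet
  intro y hy
  obtain ⟨x, hxt, hyx⟩ := Set.mem_iUnion₂.mp (htcov hy)
  have := hWsmall x ⟨hy, hyx⟩
  rw [Set.mem_singleton_iff] at this
  subst this
  exact hxt
end

section
/- Let X be a locally small generalized topological space. Then a family 𝒰 of open sets of X is admissible if and only if it is locally essentially finite, i.e., for every small open set V there is a finite subfamily 𝒰₀ ⊆ 𝒰 with V ∩ ⋃𝒰 ⊆ ⋃𝒰₀. -/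
/-- A gts is locally small if it has an admissible covering of the whole space
by small open sets. -/
def GTS.LocallySmall {X : Type*} (G : GTS X) : Prop :=
  ∃ 𝒰 ∈ G.Cov, (∀ U ∈ 𝒰, G.IsSmall U) ∧ ⋃₀ 𝒰 = Set.univ

/-- A subset `C` of a gts is connected if there is no pair of open sets `U`, `V`
with `C ∩ U`, `C ∩ V` nonempty and disjoint and `C ⊆ U ∪ V`. -/
def GTS.IsConnectedSet {X : Type*} (G : GTS X) (C : Set X) : Prop :=
  ¬ ∃ U ∈ G.Op, ∃ V ∈ G.Op, (C ∩ U).Nonempty ∧ (C ∩ V).Nonempty ∧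
      Disjoint (C ∩ U) (C ∩ V) ∧ C ⊆ U ∪ V

theorem admissible_iff_locally_essentially_finite {X : Type*} (G : GTS X)
    (hls : G.LocallySmall) (𝒰 : Set (Set X)) (hop : 𝒰 ⊆ G.Op) :
    𝒰 ∈ G.Cov ↔
      ∀ V ∈ G.Op, G.IsSmall V → ∃ 𝒰₀ ⊆ 𝒰, 𝒰₀.Finite ∧ V ∩ ⋃₀ 𝒰 ⊆ ⋃₀ 𝒰₀ := by
  constructor
  · intro hcov V _ hV
    exact hV 𝒰 hcov
  · intro h
    obtain ⟨𝒲, h𝒲cov, h𝒲small, h𝒲univ⟩ := hls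
    have h𝒲op : 𝒲 ⊆ G.Op := G.cov_subset_op 𝒲 h𝒲cov
    -- choose finite subfamilies
    have key : ∀ W : Set X, ∃ F, F ⊆ 𝒰 ∧ F.Finite ∧ (W ∈ 𝒲 → W ∩ ⋃₀ 𝒰 ⊆ ⋃₀ F) := by
      intro W
      by_cases hW : W ∈ 𝒲
      · obtain ⟨F, hF1, hF2, hF3⟩ := h W (h𝒲op hW) (h𝒲small W hW)
        exact ⟨F, hF1, hF2, fun _ => hF3⟩
      · exact ⟨∅, Set.empty_subset _, Set.finite_empty, fun hc => absurd hc hW⟩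
    choose F hFsub hFfin hFcov using key
    have hinter : ∀ W ∈ G.Op, ∀ U ∈ 𝒰, W ∩ U ∈ G.Op := by
      intro W hW U hU
      have := G.finiteness_sInter {W, U} (by
        intro s hs
        rcases hs with rfl | rfl
        · exact hW
        · exact hop hU) ((Set.finite_singleton _).insert _)
      rwa [Set.sInter_pair] at this
    have himg : ∀ W ∈ 𝒲, (fun U => W ∩ U) '' F W ⊆ G.Op := by
      intro W hW A hA
      obtain ⟨U, hU, rfl⟩ := hA
      exact hinter W (h𝒲op hW) U (hFsub W hU)
    have himgfin : ∀ W : Set X, ((fun U => W ∩ U) '' F W).Finite :=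
      fun W => (hFfin W).image _
    have hsU : ∀ W : Set X, ⋃₀ ((fun U => W ∩ U) '' F W) = W ∩ ⋃₀ (F W) := by
      intro W
      ext x
      simp [Set.sUnion_image, Set.mem_iUnion]
    have hWeq : ∀ W ∈ 𝒲, W ∩ ⋃₀ (F W) = W ∩ ⋃₀ 𝒰 := by
      intro W hW
      apply Set.Subset.antisymm
      · exact Set.inter_subset_inter_right W (Set.sUnion_mono (hFsub W))
      · intro x hx
        exact ⟨hx.1, hFcov W hW hx⟩
    -- openness of the big union
    have hUopen : ⋃₀ 𝒰 ∈ G.Op := by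
      have := G.regularity (⋃₀ 𝒰) 𝒲 h𝒲cov (by
        intro W hW
        have : ⋃₀ 𝒰 ∩ W = ⋃₀ ((fun U => W ∩ U) '' F W) := by
          rw [hsU, hWeq W hW, Set.inter_comm]
        rw [this]
        exact G.finiteness_sUnion _ (himg W hW) (himgfin W))
      rwa [h𝒲univ, Set.inter_univ] at this
    -- the big family
    set Φ : Set (Set (Set X)) := (fun W => (fun U => W ∩ U) '' F W) '' 𝒲 with hΦ
    have hΦcov : Φ ⊆ G.Cov := by
      rintro _ ⟨W, hW, rfl⟩
      exact G.finiteness_cov _ (himg W hW) (himgfin W)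
    have hΦim : Set.sUnion '' Φ = (fun U => ⋃₀ 𝒰 ∩ U) '' 𝒲 := by
      rw [hΦ, Set.image_image]
      apply Set.image_congr
      intro W hW
      rw [hsU, hWeq W hW, Set.inter_comm]
    have hΦimcov : Set.sUnion '' Φ ∈ G.Cov := by
      rw [hΦim]
      exact G.stability _ hUopen 𝒲 h𝒲cov
    have hΦunion : ⋃₀ Φ ∈ G.Cov := G.transitivity Φ hΦcov hΦimcov
    -- saturation
    apply G.saturation (⋃₀ Φ) hΦunion 𝒰 hop
    · have h1 : ⋃₀ ⋃₀ Φ = ⋃₀ (Set.sUnion '' Φ) := by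
        ext x
        simp [Set.sUnion_image, Set.mem_sUnion]
        tauto
      rw [h1, hΦim]
      ext x
      simp only [Set.sUnion_image, Set.mem_iUnion, Set.mem_inter_iff]
      constructor
      · intro hx
        have : x ∈ Set.univ := Set.mem_univ x
        rw [← h𝒲univ] at this
        obtain ⟨W, hW, hxW⟩ := this
        exact ⟨W, hW, hx, hxW⟩
      · rintro ⟨W, hW, hx, _⟩
        exact hx
    · rintro A ⟨𝒜, ⟨W, hW, rfl⟩, hA⟩
      obtain ⟨U, hU, rfl⟩ := hA
      exact ⟨U, hFsub W hU, Set.inter_subset_right⟩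
end

section
/- Let X be a locally small generalized topological space and let 𝒰 be a locally finite family of open sets of X, i.e., every small open set of X meets only finitely many members of 𝒰. Then 𝒰 is admissible. -/
theorem locally_finite_open_family_is_admissible {X : Type*} (G : GTS X)
    (hls : G.LocallySmall) (𝒰 : Set (Set X)) (hop : 𝒰 ⊆ G.Op)
    (hlf : ∀ V ∈ G.Op, G.IsSmall V → {U ∈ 𝒰 | (V ∩ U).Nonempty}.Finite) :
    𝒰 ∈ G.Cov := by
  obtain ⟨𝒲, h𝒲cov, h𝒲small, h𝒲univ⟩ := hls
  have h𝒲op : 𝒲 ⊆ G.Op := G.cov_subset_op _ h𝒲cov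
  have hemp : (∅ : Set X) ∈ G.Op := by
    simpa using G.finiteness_sUnion ∅ (by simp) Set.finite_empty
  have hinter : ∀ W ∈ G.Op, ∀ U ∈ G.Op, W ∩ U ∈ G.Op := by
    intro W hW U hU
    have := G.finiteness_sInter {W, U} (by
      intro A hA
      rcases hA with rfl | rfl <;> assumption) ((Set.finite_singleton _).insert _)
    simpa [Set.sInter_pair] using this
  set F : Set X → Set (Set X) := fun W => (fun U => W ∩ U) '' 𝒰 with hF
  have hFop : ∀ W ∈ 𝒲, F W ⊆ G.Op := by
    rintro W hW A ⟨U, hU, rfl⟩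
    exact hinter W (h𝒲op hW) U (hop hU)
  have hFfin : ∀ W ∈ 𝒲, (F W).Finite := by
    intro W hW
    have hfin : {U ∈ 𝒰 | (W ∩ U).Nonempty}.Finite :=
      hlf W (h𝒲op hW) (h𝒲small W hW)
    apply Set.Finite.subset (Set.Finite.insert ∅ (hfin.image (fun U => W ∩ U)))
    rintro A ⟨U, hU, rfl⟩
    by_cases h : (W ∩ U).Nonempty
    · exact Set.mem_insert_of_mem _ ⟨U, ⟨hU, h⟩, rfl⟩
    · rw [Set.not_nonempty_iff_eq_empty] at h
      simp [h]
  have hFcov : ∀ W ∈ 𝒲, F W ∈ G.Cov := fun W hW =>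
    G.finiteness_cov _ (hFop W hW) (hFfin W hW)
  have hFU : ∀ W : Set X, ⋃₀ F W = W ∩ ⋃₀ 𝒰 := by
    intro W
    simp [hF, Set.sUnion_image, Set.sUnion_eq_biUnion, Set.inter_iUnion]
  have hSop : ⋃₀ 𝒰 ∈ G.Op := by
    have := G.regularity (⋃₀ 𝒰) 𝒲 h𝒲cov (by
      intro W hW
      have : ⋃₀ 𝒰 ∩ W = ⋃₀ F W := by rw [hFU, Set.inter_comm]
      rw [this]
      exact G.finiteness_sUnion _ (hFop W hW) (hFfin W hW))
    simpa [h𝒲univ] using this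
  set Φ : Set (Set (Set X)) := F '' 𝒲 with hΦ
  have hΦsub : Φ ⊆ G.Cov := by
    rintro _ ⟨W, hW, rfl⟩
    exact hFcov W hW
  have himg : Set.sUnion '' Φ ∈ G.Cov := by
    have hst := G.stability _ hSop 𝒲 h𝒲cov
    have heq : Set.sUnion '' Φ = (fun U => ⋃₀ 𝒰 ∩ U) '' 𝒲 := by
      rw [hΦ, Set.image_image]
      apply Set.image_congr
      intro W _
      rw [hFU, Set.inter_comm]
    rw [heq]
    exact hst
  have hcov : ⋃₀ Φ ∈ G.Cov := G.transitivity Φ hΦsub himg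
  apply G.saturation _ hcov 𝒰 hop
  · apply le_antisymm
    · intro x hx
      rcases hx with ⟨U, hU, hxU⟩
      have hxW : x ∈ ⋃₀ 𝒲 := by rw [h𝒲univ]; trivial
      rcases hxW with ⟨W, hW, hxW⟩
      exact ⟨W ∩ U, ⟨F W, ⟨W, hW, rfl⟩, ⟨U, hU, rfl⟩⟩, ⟨hxW, hxU⟩⟩
    · rintro x ⟨A, ⟨_, ⟨W, hW, rfl⟩, ⟨U, hU, rfl⟩⟩, hx⟩
      exact ⟨U, hU, hx.2⟩
  · rintro A ⟨_, ⟨W, hW, rfl⟩, ⟨U, hU, rfl⟩⟩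
    exact ⟨U, hU, Set.inter_subset_right⟩
end

section
/- Let X be a locally small generalized topological space and let 𝒞 be a family of closed subsets of X that is locally essentially finite, i.e., for every small open set V there is a finite subfamily 𝒞₀ ⊆ 𝒞 with V ∩ ⋃𝒞 ⊆ ⋃𝒞₀. Then ⋃𝒞 is closed. -/
theorem locally_essentially_finite_union_of_closed_is_closed {X : Type*} (G : GTS X)
    (hls : G.LocallySmall) (𝒞 : Set (Set X))
    (hcl : ∀ C ∈ 𝒞, Cᶜ ∈ G.Op)
    (hlef : ∀ V ∈ G.Op, G.IsSmall V → ∃ 𝒞₀ ⊆ 𝒞, 𝒞₀.Finite ∧ V ∩ ⋃₀ 𝒞 ⊆ ⋃₀ 𝒞₀) :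
    (⋃₀ 𝒞)ᶜ ∈ G.Op := by
  obtain ⟨𝒰, h𝒰cov, h𝒰small, h𝒰univ⟩ := hls
  have key : ∀ U ∈ 𝒰, (⋃₀ 𝒞)ᶜ ∩ U ∈ G.Op := by
    intro U hU
    have hUop : U ∈ G.Op := G.cov_subset_op 𝒰 h𝒰cov hU
    obtain ⟨𝒞₀, h𝒞₀sub, h𝒞₀fin, h𝒞₀cov⟩ := hlef U hUop (h𝒰small U hU)
    have heq : (⋃₀ 𝒞)ᶜ ∩ U = U ∩ ⋂₀ (compl '' 𝒞₀) := by
      rw [← Set.compl_sUnion]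
      ext x
      simp only [Set.mem_inter_iff, Set.mem_compl_iff]
      constructor
      · rintro ⟨hx, hxU⟩
        exact ⟨hxU, fun hx0 => hx (Set.sUnion_mono h𝒞₀sub hx0)⟩
      · rintro ⟨hxU, hx0⟩
        exact ⟨fun hx => hx0 (h𝒞₀cov ⟨hxU, hx⟩), hxU⟩
    rw [heq]
    have hinter : ⋂₀ (compl '' 𝒞₀) ∈ G.Op :=
      G.finiteness_sInter _ (by rintro _ ⟨C, hC, rfl⟩; exact hcl C (h𝒞₀sub hC))
        (h𝒞₀fin.image _)
    have : ⋂₀ {U, ⋂₀ (compl '' 𝒞₀)} ∈ G.Op :=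
      G.finiteness_sInter _ (by rintro V hV; rcases hV with rfl | rfl
                                · exact hUop
                                · exact hinter)
        ((Set.finite_singleton _).insert _)
    simpa using this
  have := G.regularity _ 𝒰 h𝒰cov key
  rwa [h𝒰univ, Set.inter_univ] at this
end

section
/- Let X be a paracompact locally small generalized topological space and let Y ⊆ X be a small subset. Then the weak closure of Y (the closure of Y in the topology on X generated by the open sets of the gts) is a small subset of X. -/
/-- A locally small space is paracompact if it has a locally finite covering by
small open sets (a family of subsets is locally finite if each small open set
meets only finitely many of its members). -/
def GTS.ParacompactGTS {X : Type*} (G : GTS X) : Prop :=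
  ∃ 𝒰 ⊆ G.Op, (∀ U ∈ 𝒰, G.IsSmall U) ∧ ⋃₀ 𝒰 = Set.univ ∧
    ∀ V ∈ G.Op, G.IsSmall V → {U ∈ 𝒰 | (V ∩ U).Nonempty}.Finite

theorem weak_closure_of_small_is_small {X : Type*} (G : GTS X)
    (hls : G.LocallySmall) (hpc : G.ParacompactGTS)
    (Y : Set X) (hY : G.IsSmall Y) :
    G.IsSmall (@closure X (TopologicalSpace.generateFrom G.Op) Y) := by
  letI : TopologicalSpace X := TopologicalSpace.generateFrom G.Op
  obtain ⟨𝒮, h𝒮cov, h𝒮small, h𝒮univ⟩ := hls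
  obtain ⟨𝒲, h𝒲op, h𝒲small, h𝒲univ, h𝒲lf⟩ := hpc
  obtain ⟨𝒮₀, h𝒮₀sub, h𝒮₀fin, h𝒮₀cov⟩ := hY 𝒮 h𝒮cov
  set F : Set (Set X) := {W ∈ 𝒲 | ∃ S ∈ 𝒮₀, (W ∩ S).Nonempty} with hFdef
  have hFfin : F.Finite := by
    have hsub : F ⊆ ⋃ S ∈ 𝒮₀, {W ∈ 𝒲 | (S ∩ W).Nonempty} := by
      rintro W ⟨hW, S, hS, x, hxW, hxS⟩
      exact Set.mem_biUnion hS ⟨hW, ⟨x, hxS, hxW⟩⟩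
    exact (Set.Finite.biUnion h𝒮₀fin fun S hS =>
      h𝒲lf S (G.cov_subset_op 𝒮 h𝒮cov (h𝒮₀sub hS)) (h𝒮small S (h𝒮₀sub hS))).subset hsub
  have hclF : closure Y ⊆ ⋃₀ F := by
    intro x hx
    obtain ⟨W, hW𝒲, hxW⟩ : x ∈ ⋃₀ 𝒲 := by rw [h𝒲univ]; trivial
    have hWopen : IsOpen W := TopologicalSpace.GenerateOpen.basic _ (h𝒲op hW𝒲)
    obtain ⟨y, hyW, hyY⟩ := mem_closure_iff.mp hx W hWopen hxW
    have hy𝒮 : y ∈ ⋃₀ 𝒮₀ := h𝒮₀cov ⟨hyY, by rw [h𝒮univ]; trivial⟩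
    obtain ⟨S, hS, hyS⟩ := hy𝒮
    exact ⟨W, ⟨hW𝒲, S, hS, y, hyW, hyS⟩, hxW⟩
  intro 𝒰 h𝒰
  have hchoice : ∀ W ∈ F, ∃ 𝒰W ⊆ 𝒰, 𝒰W.Finite ∧ W ∩ ⋃₀ 𝒰 ⊆ ⋃₀ 𝒰W :=
    fun W hW => h𝒲small W hW.1 𝒰 h𝒰
  choose! f hfsub hffin hfcov using hchoice
  refine ⟨⋃ W ∈ F, f W, ?_, ?_, ?_⟩
  · exact Set.iUnion₂_subset fun W hW => hfsub W hW
  · exact hFfin.biUnion fun W hW => hffin W hW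
  · rintro x ⟨hxcl, hxU⟩
    obtain ⟨W, hWF, hxW⟩ := hclF hxcl
    obtain ⟨U, hU, hxU'⟩ := hfcov W hWF ⟨hxW, hxU⟩
    exact ⟨U, Set.mem_biUnion hWF hU, hxU'⟩
end

section
/- Every connected paracompact locally small generalized topological space is Lindelöf, i.e., admits a countable admissible family of small open sets whose union is the whole space. -/
/-- A gts is connected if the whole space is not the union of two disjoint
nonempty open sets. -/
def GTS.ConnectedSpace {X : Type*} (G : GTS X) : Prop :=
  ¬ ∃ U ∈ G.Op, ∃ V ∈ G.Op, U.Nonempty ∧ V.Nonempty ∧ Disjoint U V ∧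
      U ∪ V = Set.univ

/-! Every member of a locally finite cover by small open sets meets only finitely many others,
so starting from one member and repeatedly adding the members that meet the family built so far
yields an increasing sequence of finite families. Its union `𝒲` and the rest of the cover have
disjoint open unions (unions of subfamilies of a locally finite open family are open, by
regularity), so by connectedness `𝒲` already covers the space. Being locally finite, `𝒲` is
admissible, and it is countable as a countable union of finite families. -/

section LinkedFamily

variable {X : Type*} (𝒰 𝒜 : Set (Set X))

def linkedFamily : ℕ → Set (Set X)
  | 0 => 𝒜
  | n + 1 => linkedFamily n ∪ {U ∈ 𝒰 | ∃ A ∈ linkedFamily n, (A ∩ U).Nonempty}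

def linkedComponent : Set (Set X) := ⋃ n, linkedFamily 𝒰 𝒜 n

variable {𝒰 𝒜}

theorem linkedFamily_subset (h𝒜 : 𝒜 ⊆ 𝒰) : ∀ n, linkedFamily 𝒰 𝒜 n ⊆ 𝒰
  | 0 => h𝒜
  | n + 1 => Set.union_subset (linkedFamily_subset h𝒜 n) (Set.sep_subset _ _)

theorem linkedFamily_finite (h𝒜 : 𝒜 ⊆ 𝒰) (h𝒜fin : 𝒜.Finite)
    (h𝒰 : ∀ A ∈ 𝒰, {U ∈ 𝒰 | (A ∩ U).Nonempty}.Finite) : ∀ n, (linkedFamily 𝒰 𝒜 n).Finite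
  | 0 => h𝒜fin
  | n + 1 => by
    have ih := linkedFamily_finite h𝒜 h𝒜fin h𝒰 n
    refine ih.union <| (ih.biUnion fun A hA => h𝒰 A (linkedFamily_subset h𝒜 n hA)).subset ?_
    rintro U ⟨hU, A, hA, hAU⟩
    exact Set.mem_biUnion hA ⟨hU, hAU⟩

theorem linkedFamily_subset_linkedComponent (n : ℕ) :
    linkedFamily 𝒰 𝒜 n ⊆ linkedComponent 𝒰 𝒜 :=
  Set.subset_iUnion (linkedFamily 𝒰 𝒜) n

theorem linkedComponent_subset (h𝒜 : 𝒜 ⊆ 𝒰) : linkedComponent 𝒰 𝒜 ⊆ 𝒰 :=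
  Set.iUnion_subset (linkedFamily_subset h𝒜)

theorem linkedComponent_countable (h𝒜 : 𝒜 ⊆ 𝒰) (h𝒜fin : 𝒜.Finite)
    (h𝒰 : ∀ A ∈ 𝒰, {U ∈ 𝒰 | (A ∩ U).Nonempty}.Finite) : (linkedComponent 𝒰 𝒜).Countable :=
  Set.countable_iUnion fun n => (linkedFamily_finite h𝒜 h𝒜fin h𝒰 n).countable

theorem mem_linkedComponent_of_inter_nonempty {A U : Set X} (hA : A ∈ linkedComponent 𝒰 𝒜)
    (hU : U ∈ 𝒰) (hAU : (A ∩ U).Nonempty) : U ∈ linkedComponent 𝒰 𝒜 := by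
  obtain ⟨n, hAn⟩ := Set.mem_iUnion.mp hA
  exact linkedFamily_subset_linkedComponent (n + 1) (Or.inr ⟨hU, A, hAn, hAU⟩)

theorem disjoint_sUnion_linkedComponent_sUnion_diff :
    Disjoint (⋃₀ linkedComponent 𝒰 𝒜) (⋃₀ (𝒰 \ linkedComponent 𝒰 𝒜)) := by
  rw [Set.disjoint_left]
  rintro x ⟨A, hA, hxA⟩ ⟨U, ⟨hU, hU𝒲⟩, hxU⟩
  exact hU𝒲 (mem_linkedComponent_of_inter_nonempty hA hU ⟨x, hxA, hxU⟩)

end LinkedFamily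

theorem sUnion_image_sUnion {X : Type*} (Φ : Set (Set (Set X))) :
    ⋃₀ (Set.sUnion '' Φ) = ⋃₀ ⋃₀ Φ := by
  ext x
  simp only [Set.mem_sUnion, Set.sUnion_image, Set.mem_iUnion]
  grind

theorem sUnion_inter_eq_sUnion_sep_inter {X : Type*} (𝒱 : Set (Set X)) (S : Set X) :
    ⋃₀ 𝒱 ∩ S = ⋃₀ {V ∈ 𝒱 | (S ∩ V).Nonempty} ∩ S := by
  ext x
  simp only [Set.mem_inter_iff, Set.mem_sUnion, Set.mem_ofPred_eq]
  constructor
  · rintro ⟨⟨V, hV, hxV⟩, hxS⟩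
    exact ⟨⟨V, ⟨hV, x, hxS, hxV⟩, hxV⟩, hxS⟩
  · rintro ⟨⟨V, ⟨hV, -⟩, hxV⟩, hxS⟩
    exact ⟨⟨V, hV, hxV⟩, hxS⟩

namespace GTS

variable {X : Type*} (G : GTS X)

def IsLocallyFinite (𝒱 : Set (Set X)) : Prop :=
  ∀ V ∈ G.Op, G.IsSmall V → {U ∈ 𝒱 | (V ∩ U).Nonempty}.Finite

variable {G}

theorem IsLocallyFinite.subset {𝒱 𝒲 : Set (Set X)} (h𝒱 : G.IsLocallyFinite 𝒱) (h𝒲 : 𝒲 ⊆ 𝒱) :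
    G.IsLocallyFinite 𝒲 :=
  fun V hV hVs => (h𝒱 V hV hVs).subset fun _ hU => ⟨h𝒲 hU.1, hU.2⟩

theorem inter_mem_op {A B : Set X} (hA : A ∈ G.Op) (hB : B ∈ G.Op) : A ∩ B ∈ G.Op := by
  simpa only [Set.sInter_pair] using
    G.finiteness_sInter {A, B} (Set.pair_subset hA hB) (Set.toFinite _)

theorem sUnion_mem_op_of_isLocallyFinite (hls : G.LocallySmall) {𝒱 : Set (Set X)}
    (h𝒱 : 𝒱 ⊆ G.Op) (hlf : G.IsLocallyFinite 𝒱) : ⋃₀ 𝒱 ∈ G.Op := by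
  obtain ⟨𝒮, h𝒮, h𝒮small, h𝒮univ⟩ := hls
  have hreg := G.regularity (⋃₀ 𝒱) 𝒮 h𝒮 fun S hS => by
    have hSop := G.cov_subset_op 𝒮 h𝒮 hS
    rw [sUnion_inter_eq_sUnion_sep_inter]
    exact G.inter_mem_op (G.finiteness_sUnion _ (fun V hV => h𝒱 hV.1)
      (hlf S hSop (h𝒮small S hS))) hSop
  rwa [h𝒮univ, Set.inter_univ] at hreg

theorem mem_cov_of_isLocallyFinite (hls : G.LocallySmall) {𝒱 : Set (Set X)}
    (h𝒱 : 𝒱 ⊆ G.Op) (hlf : G.IsLocallyFinite 𝒱) : 𝒱 ∈ G.Cov := by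
  have hW := G.sUnion_mem_op_of_isLocallyFinite hls h𝒱 hlf
  obtain ⟨𝒮, h𝒮, h𝒮small, h𝒮univ⟩ := hls
  have h𝒮op := G.cov_subset_op 𝒮 h𝒮
  -- `𝒱` arises by transitivity from the finite families `𝒱ₛ S`, whose unions refine the
  -- admissible family `(⋃₀ 𝒱 ∩ ·) '' 𝒮`.
  set 𝒱ₛ : Set X → Set (Set X) := fun S => {V ∈ 𝒱 | (S ∩ V).Nonempty}
  have h𝒱ₛfin (S) (hS : S ∈ 𝒮) : (𝒱ₛ S).Finite := hlf S (h𝒮op hS) (h𝒮small S hS)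
  have h𝒱ₛcov : 𝒱ₛ '' 𝒮 ⊆ G.Cov := by
    rintro _ ⟨S, hS, rfl⟩
    exact G.finiteness_cov _ (fun V hV => h𝒱 hV.1) (h𝒱ₛfin S hS)
  have hcover : ⋃₀ ⋃₀ (𝒱ₛ '' 𝒮) = ⋃₀ 𝒱 := by
    refine subset_antisymm (Set.sUnion_mono (Set.sUnion_subset ?_)) fun x ⟨V, hV, hxV⟩ => ?_
    · rintro _ ⟨S, -, rfl⟩
      exact Set.sep_subset _ _
    · obtain ⟨S, hS, hxS⟩ := Set.mem_sUnion.mp (h𝒮univ ▸ Set.mem_univ x)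
      exact ⟨V, ⟨𝒱ₛ S, ⟨S, hS, rfl⟩, hV, x, hxS, hxV⟩, hxV⟩
  have hunions : Set.sUnion '' (𝒱ₛ '' 𝒮) ∈ G.Cov := by
    refine G.saturation _ (G.stability _ hW 𝒮 h𝒮) _ ?_ ?_ ?_
    · rintro _ ⟨_, ⟨S, hS, rfl⟩, rfl⟩
      exact G.finiteness_sUnion _ (fun V hV => h𝒱 hV.1) (h𝒱ₛfin S hS)
    · rw [sUnion_image_sUnion, hcover, Set.sUnion_image, ← Set.inter_iUnion₂,
        ← Set.sUnion_eq_biUnion, h𝒮univ, Set.inter_univ]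
    · rintro _ ⟨S, hS, rfl⟩
      refine ⟨⋃₀ 𝒱ₛ S, ⟨𝒱ₛ S, ⟨S, hS, rfl⟩, rfl⟩, ?_⟩
      change ⋃₀ 𝒱 ∩ S ⊆ _
      rw [sUnion_inter_eq_sUnion_sep_inter]
      exact Set.inter_subset_left
  refine G.saturation _ (G.transitivity _ h𝒱ₛcov hunions) 𝒱 h𝒱 hcover.symm ?_
  rintro V ⟨_, ⟨S, -, rfl⟩, hV⟩
  exact ⟨V, hV.1, subset_rfl⟩

theorem ConnectedSpace.eq_empty_of_disjoint (hconn : G.ConnectedSpace) {U V : Set X}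
    (hU : U ∈ G.Op) (hV : V ∈ G.Op) (hUne : U.Nonempty) (hUV : Disjoint U V)
    (hcover : U ∪ V = Set.univ) : V = ∅ :=
  Set.not_nonempty_iff_eq_empty.mp fun hVne => hconn ⟨U, hU, V, hV, hUne, hVne, hUV, hcover⟩

theorem sUnion_linkedComponent_eq_univ (hls : G.LocallySmall) (hconn : G.ConnectedSpace)
    {𝒰 𝒜 : Set (Set X)} (h𝒰 : 𝒰 ⊆ G.Op) (hlf : G.IsLocallyFinite 𝒰)
    (hcover : ⋃₀ 𝒰 = Set.univ) (h𝒜 : 𝒜 ⊆ 𝒰) (h𝒜ne : (⋃₀ 𝒜).Nonempty) :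
    ⋃₀ linkedComponent 𝒰 𝒜 = Set.univ := by
  have h𝒲 : linkedComponent 𝒰 𝒜 ⊆ 𝒰 := linkedComponent_subset h𝒜
  have hrest : 𝒰 \ linkedComponent 𝒰 𝒜 ⊆ 𝒰 := Set.sdiff_subset
  have hsplit : ⋃₀ linkedComponent 𝒰 𝒜 ∪ ⋃₀ (𝒰 \ linkedComponent 𝒰 𝒜) = Set.univ := by
    rw [← Set.sUnion_union, Set.union_sdiff_cancel h𝒲, hcover]
  have hrest_empty := hconn.eq_empty_of_disjoint
    (G.sUnion_mem_op_of_isLocallyFinite hls (h𝒲.trans h𝒰) (hlf.subset h𝒲))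
    (G.sUnion_mem_op_of_isLocallyFinite hls (hrest.trans h𝒰) (hlf.subset hrest))
    (h𝒜ne.mono (Set.sUnion_mono (linkedFamily_subset_linkedComponent 0)))
    disjoint_sUnion_linkedComponent_sUnion_diff hsplit
  rwa [hrest_empty, Set.union_empty] at hsplit

end GTS

theorem connected_paracompact_is_lindelof {X : Type*} (G : GTS X)
    (hls : G.LocallySmall) (hconn : G.ConnectedSpace) (hpc : G.ParacompactGTS) :
    ∃ 𝒰 ∈ G.Cov, 𝒰.Countable ∧ (∀ U ∈ 𝒰, G.IsSmall U) ∧ ⋃₀ 𝒰 = Set.univ := by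
  obtain ⟨𝒰, h𝒰op, h𝒰small, h𝒰univ, h𝒰lf⟩ := hpc
  replace h𝒰lf : G.IsLocallyFinite 𝒰 := h𝒰lf
  rcases isEmpty_or_nonempty X with hX | ⟨⟨x⟩⟩
  · exact ⟨∅, G.finiteness_cov ∅ (Set.empty_subset _) Set.finite_empty, Set.countable_empty,
      fun _ h => h.elim, Set.eq_univ_of_forall hX.elim⟩
  obtain ⟨U₀, hU₀, hxU₀⟩ := Set.mem_sUnion.mp (h𝒰univ ▸ Set.mem_univ x)
  have hU₀𝒰 : {U₀} ⊆ 𝒰 := Set.singleton_subset_iff.mpr hU₀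
  have h𝒲 : linkedComponent 𝒰 {U₀} ⊆ 𝒰 := linkedComponent_subset hU₀𝒰
  have h𝒰meets : ∀ A ∈ 𝒰, {U ∈ 𝒰 | (A ∩ U).Nonempty}.Finite :=
    fun A hA => h𝒰lf A (h𝒰op hA) (h𝒰small A hA)
  exact ⟨linkedComponent 𝒰 {U₀},
    G.mem_cov_of_isLocallyFinite hls (h𝒲.trans h𝒰op) (h𝒰lf.subset h𝒲),
    linkedComponent_countable hU₀𝒰 (Set.finite_singleton U₀) h𝒰meets,
    fun U hU => h𝒰small U (h𝒲 hU),
    G.sUnion_linkedComponent_eq_univ hls hconn h𝒰op h𝒰lf h𝒰univ hU₀𝒰 ⟨x, U₀, rfl, hxU₀⟩⟩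
end

section
/- Let X be a weakly small generalized topological space with exhaustion (X_α)_{α ∈ A}, and let 𝒞 be a piecewise essentially finite family of closed subsets of X, i.e., for every α ∈ A there is a finite subfamily 𝒞₀ ⊆ 𝒞 with (⋃𝒞) ∩ X_α ⊆ ⋃𝒞₀. Then ⋃𝒞 is closed. -/
/-- An exhaustion of a gts: a directed family of closed small subsets, indexed
by a partially ordered set, from which the gts is obtained as the inductive
limit. A gts admitting an exhaustion is a weakly small space, and the sets
`piece α` are its pieces. -/
structure IsExhaustion {X A : Type*} [PartialOrder A] (G : GTS X)
    (piece : A → Set X) : Prop where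
  closed : ∀ α : A, (piece α)ᶜ ∈ G.Op
  small : ∀ α : A, G.IsSmall (piece α)
  covers : (⋃ α : A, piece α) = Set.univ
  mono : ∀ α β : A, α ≤ β → piece α ⊆ piece β
  finiteBelow : ∀ α : A, {β : A | β < α}.Finite
  inter_piece : ∀ α β : A, ∃ γ : A, piece α ∩ piece β = piece γ
  directed : ∀ α β : A, ∃ γ : A, α ≤ γ ∧ β ≤ γ
  open_iff : ∀ U : Set X, U ∈ G.Op ↔
    ∀ α : A, ∃ O ∈ G.Op, U ∩ piece α = O ∩ piece α
  cov_iff : ∀ 𝒰 ⊆ G.Op, (𝒰 ∈ G.Cov ↔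
    ∀ α : A, EssFinite ((fun U => U ∩ piece α) '' 𝒰))

theorem piecewise_essentially_finite_union_of_closed_is_closed
    {X A : Type*} [PartialOrder A] (G : GTS X) (piece : A → Set X)
    (hex : IsExhaustion G piece) (𝒞 : Set (Set X))
    (hcl : ∀ C ∈ 𝒞, Cᶜ ∈ G.Op)
    (hpef : ∀ α : A, ∃ 𝒞₀ ⊆ 𝒞, 𝒞₀.Finite ∧ (⋃₀ 𝒞) ∩ piece α ⊆ ⋃₀ 𝒞₀) :
    (⋃₀ 𝒞)ᶜ ∈ G.Op := by
  rw [hex.open_iff]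
  intro α
  obtain ⟨𝒞₀, h𝒞₀, hfin, hsub⟩ := hpef α
  refine ⟨(⋃₀ 𝒞₀)ᶜ, ?_, ?_⟩
  · rw [Set.compl_sUnion]
    exact G.finiteness_sInter _ (by rintro _ ⟨C, hC, rfl⟩; exact hcl C (h𝒞₀ hC))
      (hfin.image _)
  · ext x
    simp only [Set.mem_inter_iff, Set.mem_compl_iff]
    constructor
    · rintro ⟨hx, hxα⟩
      exact ⟨fun h => hx (Set.sUnion_mono h𝒞₀ h), hxα⟩
    · rintro ⟨hx, hxα⟩
      exact ⟨fun h => hx (hsub ⟨h, hxα⟩), hxα⟩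
end
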